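/- Let T > 0, and let E₁, E₂, E₃ : [0,T) → ℝ be absolutely continuous nonnegative functions. Suppose there is an absolutely continuous functional L(t) and constants m, M > 0 with m(E₁²(t)+E₂²(t)+E₃²(t)) ≤ L(t) ≤ M(E₁²(t)+E₂²(t)+E₃²(t)) for all t, and strictly positive constants a₁, a₂, a₃ and a constant C > 0 such that for almost every t ∈ (0,T): L'(t) + a₁E₁²(t) + a₂E₂²(t) + a₃E₃²(t) ≤ C g₁(t) √L(t) + C g₂(t) E₁(t), where g₁ ∈ L¹(0,T) and g₂ ∈ L²(0,T) are nonnegative. Then there exists C' > 0 depending only on m, M, C (in particular independent of T, a₁, a₂, a₃) such that sup_{t∈[0,T]}(E₁+E₂+E₃)(t) + √a₁‖E₁‖_{L²(0,T)} + √a₂‖E₂‖_{L²(0,T)} + √a₃‖E₃‖_{L²(0,T)} ≤ C'(E₁(0)+E₂(0)+E₃(0)) + C'‖g₁‖_{L¹(0,T)} + (C'/√a₁)‖g₂‖_{L²(0,T)}. -/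

import Mathlib

open MeasureTheory Set

private lemma aux_sq3 (x y z : ℝ) : (x + y + z) ^ 2 ≤ 3 * (x ^ 2 + y ^ 2 + z ^ 2) := by
  nlinarith [sq_nonneg (x - y), sq_nonneg (x - z), sq_nonneg (y - z)]

private lemma aux_sum_sq {M x y z l : ℝ} (hM : 0 ≤ M) (h1 : 0 ≤ x) (h2 : 0 ≤ y) (h3 : 0 ≤ z)
    (h : l ≤ M * (x ^ 2 + y ^ 2 + z ^ 2)) : l ≤ M * (x + y + z) ^ 2 := by
  nlinarith [mul_nonneg (mul_nonneg hM h1) h2, mul_nonneg (mul_nonneg hM h1) h3,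
    mul_nonneg (mul_nonneg hM h2) h3]

set_option maxHeartbeats 1000000 in
/-- Grönwall-type energy lemma (Lemma `lemmaL1L2` of the paper).
Given absolutely continuous nonnegative `E₁, E₂, E₃` on `[0,T)`, a Lyapunov functional
`L` equivalent to `E₁² + E₂² + E₃²` satisfying
`L' + a₁E₁² + a₂E₂² + a₃E₃² ≤ C g₁ √L + C g₂ E₁` on `(0,T)`,
with `g₁ ∈ L¹(0,T)`, `g₂ ∈ L²(0,T)` nonnegative, one gets a time-integrated bound
with a constant `C'` depending only on `m, M, C` (independent of `T, a₁, a₂, a₃`). -/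
theorem gronwall_energy_lemma
    (m M C : ℝ) (hm : 0 < m) (hM : 0 < M) (hC : 0 < C) :
    ∃ C' : ℝ, 0 < C' ∧
      ∀ (T a₁ a₂ a₃ : ℝ) (E₁ E₂ E₃ L L' g₁ g₂ : ℝ → ℝ),
        0 < T → 0 < a₁ → 0 < a₂ → 0 < a₃ →
        -- nonnegativity
        (∀ t ∈ Icc (0:ℝ) T, 0 ≤ E₁ t ∧ 0 ≤ E₂ t ∧ 0 ≤ E₃ t) →
        -- absolute continuity (encoded via continuity on `[0,T]` and
        -- differentiability of the Lyapunov functional on `(0,T)`)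
        ContinuousOn E₁ (Icc 0 T) → ContinuousOn E₂ (Icc 0 T) →
        ContinuousOn E₃ (Icc 0 T) → ContinuousOn L (Icc 0 T) →
        (∀ t ∈ Ioo (0:ℝ) T, HasDerivAt L (L' t) t) →
        -- equivalence `L ∼ E₁² + E₂² + E₃²`
        (∀ t ∈ Icc (0:ℝ) T,
          m * ((E₁ t) ^ 2 + (E₂ t) ^ 2 + (E₃ t) ^ 2) ≤ L t ∧
          L t ≤ M * ((E₁ t) ^ 2 + (E₂ t) ^ 2 + (E₃ t) ^ 2)) →
        -- the differential inequality, a.e. on `(0,T)`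
        (∀ᵐ t ∂(volume.restrict (Ioo (0:ℝ) T)),
          L' t + a₁ * (E₁ t) ^ 2 + a₂ * (E₂ t) ^ 2 + a₃ * (E₃ t) ^ 2 ≤
            C * g₁ t * Real.sqrt (L t) + C * g₂ t * E₁ t) →
        -- `g₁ ∈ L¹(0,T)`, `g₂ ∈ L²(0,T)`, nonnegative
        (∀ t ∈ Ioo (0:ℝ) T, 0 ≤ g₁ t ∧ 0 ≤ g₂ t) →
        IntegrableOn g₁ (Ioo 0 T) →
        IntegrableOn (fun t => (g₂ t) ^ 2) (Ioo 0 T) →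
        (⨆ t ∈ Icc (0:ℝ) T, (E₁ t + E₂ t + E₃ t)) +
            Real.sqrt a₁ * Real.sqrt (∫ t in Ioo (0:ℝ) T, (E₁ t) ^ 2) +
            Real.sqrt a₂ * Real.sqrt (∫ t in Ioo (0:ℝ) T, (E₂ t) ^ 2) +
            Real.sqrt a₃ * Real.sqrt (∫ t in Ioo (0:ℝ) T, (E₃ t) ^ 2) ≤
          C' * (E₁ 0 + E₂ 0 + E₃ 0) + C' * (∫ t in Ioo (0:ℝ) T, g₁ t) +
            (C' / Real.sqrt a₁) * Real.sqrt (∫ t in Ioo (0:ℝ) T, (g₂ t) ^ 2) := by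
  set c₁ : ℝ := Real.sqrt (12 * M / m) with hc₁def
  set c₂ : ℝ := 6 * C * Real.sqrt M / m with hc₂def
  set c₃ : ℝ := Real.sqrt (6 / m) * C with hc₃def
  have hsM : (Real.sqrt M) ^ 2 = M := Real.sq_sqrt hM.le
  have hc₁ : 0 ≤ c₁ := Real.sqrt_nonneg _
  have hc₂ : 0 ≤ c₂ := by positivity
  have hc₃ : 0 ≤ c₃ := by positivity
  set κ : ℝ := 2 * M + 2 * C * Real.sqrt M * (c₁ + c₂ + c₃) + C ^ 2 with hκdef
  have hκ : 0 ≤ κ := by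
    rw [hκdef]
    have h1 : 0 ≤ 2 * C * Real.sqrt M * (c₁ + c₂ + c₃) :=
      mul_nonneg (mul_nonneg (mul_nonneg (by norm_num) hC.le) (Real.sqrt_nonneg M))
        (add_nonneg (add_nonneg hc₁ hc₂) hc₃)
    nlinarith [sq_nonneg C]
  set K : ℝ := c₁ + c₂ + c₃ + 3 * Real.sqrt κ + 1 with hKdef
  have hK : 0 < K := by
    rw [hKdef]; linarith [Real.sqrt_nonneg κ]
  clear_value c₁ c₂ c₃ κ K
  refine ⟨K, hK, ?_⟩
  intro T a₁ a₂ a₃ E₁ E₂ E₃ L L' g₁ g₂ hT ha₁ ha₂ ha₃ hEnn hcE₁ hcE₂ hcE₃ hcL hLd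
    hLequiv hineq hgnn hg₁int hg₂sq
  have hTIcc : T ∈ Icc (0:ℝ) T := ⟨hT.le, le_rfl⟩
  have h0Icc : (0:ℝ) ∈ Icc (0:ℝ) T := ⟨le_rfl, hT.le⟩
  have hIooIcc : Ioo (0:ℝ) T ⊆ Icc 0 T := Ioo_subset_Icc_self
  have hLnn : ∀ t ∈ Icc (0:ℝ) T, 0 ≤ L t := fun t ht =>
    le_trans (by positivity) (hLequiv t ht).1
  -- maximum of E₁+E₂+E₃
  obtain ⟨t₀, ht₀, ht₀max⟩ := isCompact_Icc.exists_isMaxOn (nonempty_Icc.mpr hT.le)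
    ((hcE₁.add hcE₂).add hcE₃)
  set S : ℝ := E₁ t₀ + E₂ t₀ + E₃ t₀ with hSdef
  have hSnn : 0 ≤ S := by
    obtain ⟨h1, h2, h3⟩ := hEnn t₀ ht₀; rw [hSdef]; linarith
  have hsum_le_S : ∀ t ∈ Icc (0:ℝ) T, E₁ t + E₂ t + E₃ t ≤ S := fun t ht => ht₀max ht
  clear_value S
  have hsqrtL : ∀ t ∈ Icc (0:ℝ) T, Real.sqrt (L t) ≤ Real.sqrt M * S := by
    intro t ht
    obtain ⟨h1, h2, h3⟩ := hEnn t ht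
    have hL2 : L t ≤ M * (E₁ t + E₂ t + E₃ t) ^ 2 := by
      have h := (hLequiv t ht).2
      nlinarith [mul_nonneg (mul_nonneg hM.le h1) h2, mul_nonneg (mul_nonneg hM.le h1) h3,
        mul_nonneg (mul_nonneg hM.le h2) h3]
    calc Real.sqrt (L t) ≤ Real.sqrt (M * (E₁ t + E₂ t + E₃ t) ^ 2) := Real.sqrt_le_sqrt hL2
      _ = Real.sqrt M * (E₁ t + E₂ t + E₃ t) := by
          rw [Real.sqrt_mul hM.le, Real.sqrt_sq (by linarith)]
      _ ≤ Real.sqrt M * S := mul_le_mul_of_nonneg_left (hsum_le_S t ht) (Real.sqrt_nonneg M)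
  -- integrability facts
  have hre : volume.restrict (Icc (0:ℝ) T) = volume.restrict (Ioo (0:ℝ) T) :=
    (Measure.restrict_congr_set Ioo_ae_eq_Icc).symm
  have hg₁Icc : IntegrableOn g₁ (Icc 0 T) := by
    rw [IntegrableOn, hre]; exact hg₁int
  have hg₂sm : AEStronglyMeasurable g₂ (volume.restrict (Ioo (0:ℝ) T)) := by
    have h1 : AEStronglyMeasurable (fun s => Real.sqrt ((g₂ s) ^ 2))
        (volume.restrict (Ioo (0:ℝ) T)) :=
      Real.continuous_sqrt.comp_aestronglyMeasurable hg₂sq.1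
    refine h1.congr ?_
    filter_upwards [ae_restrict_mem measurableSet_Ioo] with s hs
    exact Real.sqrt_sq (hgnn s hs).2
  have hg₂int : IntegrableOn g₂ (Ioo 0 T) := by
    refine Integrable.mono'
      (hg₂sq.add ((integrableOn_const_iff (C := (1:ℝ))).mpr (Or.inr measure_Ioo_lt_top))) hg₂sm ?_
    refine Filter.Eventually.of_forall fun s => ?_
    simp only [Pi.add_apply, Real.norm_eq_abs]
    nlinarith [sq_nonneg (|g₂ s| - 1), sq_abs (g₂ s), abs_nonneg (g₂ s)]
  have hg₂Icc : IntegrableOn g₂ (Icc 0 T) := by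
    rw [IntegrableOn, hre]; exact hg₂int
  have hE₁sq : IntegrableOn (fun s => (E₁ s) ^ 2) (Icc 0 T) := (hcE₁.pow 2).integrableOn_Icc
  have hE₂sq : IntegrableOn (fun s => (E₂ s) ^ 2) (Icc 0 T) := (hcE₂.pow 2).integrableOn_Icc
  have hE₃sq : IntegrableOn (fun s => (E₃ s) ^ 2) (Icc 0 T) := (hcE₃.pow 2).integrableOn_Icc
  have hsqLc : ContinuousOn (fun s => Real.sqrt (L s)) (Icc 0 T) :=
    Real.continuous_sqrt.comp_continuousOn hcL
  have hterm1 : IntegrableOn (fun s => C * g₁ s * Real.sqrt (L s)) (Icc 0 T) := by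
    have h := Integrable.bdd_mul (c := C * (Real.sqrt M * S)) hg₁Icc
      ((hsqLc.aestronglyMeasurable measurableSet_Icc).const_mul C) ?_
    · exact h.congr (Filter.Eventually.of_forall fun s => by ring)
    · filter_upwards [ae_restrict_mem measurableSet_Icc] with s hs
      rw [Real.norm_eq_abs, abs_of_nonneg (mul_nonneg hC.le (Real.sqrt_nonneg _))]
      exact mul_le_mul_of_nonneg_left (hsqrtL s hs) hC.le
  have hterm2 : IntegrableOn (fun s => C * g₂ s * E₁ s) (Icc 0 T) := by
    have h := Integrable.bdd_mul (c := C * S) hg₂Icc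
      ((hcE₁.aestronglyMeasurable measurableSet_Icc).const_mul C) ?_
    · exact h.congr (Filter.Eventually.of_forall fun s => by ring)
    · filter_upwards [ae_restrict_mem measurableSet_Icc] with s hs
      obtain ⟨h1, h2, h3⟩ := hEnn s hs
      rw [Real.norm_eq_abs, abs_of_nonneg (mul_nonneg hC.le h1)]
      have hE1S : E₁ s ≤ S := by have := hsum_le_S s hs; linarith
      exact mul_le_mul_of_nonneg_left hE1S hC.le
  have haterms : IntegrableOn
      (fun s => a₁ * (E₁ s) ^ 2 + a₂ * (E₂ s) ^ 2 + a₃ * (E₃ s) ^ 2) (Icc 0 T) :=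
    ((hE₁sq.const_mul a₁).add (hE₂sq.const_mul a₂)).add (hE₃sq.const_mul a₃)
  set ψ : ℝ → ℝ := fun s => C * g₁ s * Real.sqrt (L s) + C * g₂ s * E₁ s -
    (a₁ * (E₁ s) ^ 2 + a₂ * (E₂ s) ^ 2 + a₃ * (E₃ s) ^ 2) with hψdef
  have hψIcc : IntegrableOn ψ (Icc 0 T) := (hterm1.add hterm2).sub haterms
  set φ : ℝ → ℝ := fun s => max (L' s) (ψ s) with hφdef
  have hφψ : φ =ᵐ[volume.restrict (Ioo (0:ℝ) T)] ψ := by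
    filter_upwards [hineq] with s hs
    have : L' s ≤ ψ s := by rw [hψdef]; dsimp only; linarith
    rw [hφdef]; dsimp only; exact max_eq_right this
  -- abbreviations for integrals
  set A : ℝ := ∫ s in Ioo (0:ℝ) T, g₁ s with hAdef
  set Bsq : ℝ := ∫ s in Ioo (0:ℝ) T, (g₂ s) ^ 2 with hBdef
  set I₁ : ℝ := ∫ s in Ioo (0:ℝ) T, (E₁ s) ^ 2 with hI₁def
  set I₂ : ℝ := ∫ s in Ioo (0:ℝ) T, (E₂ s) ^ 2 with hI₂def
  set I₃ : ℝ := ∫ s in Ioo (0:ℝ) T, (E₃ s) ^ 2 with hI₃def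
  have hAnn : 0 ≤ A := setIntegral_nonneg measurableSet_Ioo fun s hs => (hgnn s hs).1
  have hBnn : 0 ≤ Bsq := setIntegral_nonneg measurableSet_Ioo fun s _ => sq_nonneg _
  have hI₁nn : 0 ≤ I₁ := setIntegral_nonneg measurableSet_Ioo fun s _ => sq_nonneg _
  have hI₂nn : 0 ≤ I₂ := setIntegral_nonneg measurableSet_Ioo fun s _ => sq_nonneg _
  have hI₃nn : 0 ≤ I₃ := setIntegral_nonneg measurableSet_Ioo fun s _ => sq_nonneg _
  clear_value A Bsq I₁ I₂ I₃
  -- main integrated inequality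
  have hmain : ∀ t ∈ Icc (0:ℝ) T,
      L t + ∫ s in Ioo (0:ℝ) t, (a₁ * (E₁ s) ^ 2 + a₂ * (E₂ s) ^ 2 + a₃ * (E₃ s) ^ 2) ≤
      L 0 + (∫ s in Ioo (0:ℝ) T, C * g₁ s * Real.sqrt (L s)) +
        (∫ s in Ioo (0:ℝ) T, C * g₂ s * E₁ s) := by
    intro t ht
    have hsub : Icc (0:ℝ) t ⊆ Icc 0 T := Icc_subset_Icc le_rfl ht.2
    have hsubo : Ioo (0:ℝ) t ⊆ Ioo 0 T := Ioo_subset_Ioo le_rfl ht.2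
    have hret : volume.restrict (Icc (0:ℝ) t) = volume.restrict (Ioo (0:ℝ) t) :=
      (Measure.restrict_congr_set Ioo_ae_eq_Icc).symm
    have hφψt : φ =ᵐ[volume.restrict (Ioo (0:ℝ) t)] ψ :=
      ae_restrict_of_ae_restrict_of_subset hsubo hφψ
    have hψt : IntegrableOn ψ (Ioo 0 t) := hψIcc.mono_set (hsubo.trans hIooIcc)
    have hφint : IntegrableOn φ (Icc 0 t) := by
      rw [IntegrableOn, hret]; exact hψt.congr hφψt.symm
    have hFTC : L t - L 0 ≤ ∫ y in (0:ℝ)..t, φ y :=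
      intervalIntegral.sub_le_integral_of_hasDeriv_right_of_le ht.1 (hcL.mono hsub)
        (fun x hx => (hLd x (hsubo hx)).hasDerivWithinAt) hφint
        (fun x _ => le_max_left _ _)
    rw [intervalIntegral.integral_of_le ht.1, integral_Ioc_eq_integral_Ioo] at hFTC
    have hint_eq : ∫ y in Ioo (0:ℝ) t, φ y = ∫ y in Ioo (0:ℝ) t, ψ y :=
      integral_congr_ae hφψt
    rw [hint_eq] at hFTC
    have h1t : IntegrableOn (fun s => C * g₁ s * Real.sqrt (L s)) (Ioo 0 t) :=
      hterm1.mono_set (hsubo.trans hIooIcc)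
    have h2t : IntegrableOn (fun s => C * g₂ s * E₁ s) (Ioo 0 t) :=
      hterm2.mono_set (hsubo.trans hIooIcc)
    have h3t : IntegrableOn
        (fun s => a₁ * (E₁ s) ^ 2 + a₂ * (E₂ s) ^ 2 + a₃ * (E₃ s) ^ 2) (Ioo 0 t) :=
      haterms.mono_set (hsubo.trans hIooIcc)
    have hsplit : ∫ y in Ioo (0:ℝ) t, ψ y =
        (∫ s in Ioo (0:ℝ) t, C * g₁ s * Real.sqrt (L s)) +
          (∫ s in Ioo (0:ℝ) t, C * g₂ s * E₁ s) -
          ∫ s in Ioo (0:ℝ) t, (a₁ * (E₁ s) ^ 2 + a₂ * (E₂ s) ^ 2 + a₃ * (E₃ s) ^ 2) := by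
      have h12t : IntegrableOn
          (fun s => C * g₁ s * Real.sqrt (L s) + C * g₂ s * E₁ s) (Ioo 0 t) := h1t.add h2t
      rw [hψdef]
      rw [integral_sub h12t h3t, integral_add h1t h2t]
    rw [hsplit] at hFTC
    have hmono1 : (∫ s in Ioo (0:ℝ) t, C * g₁ s * Real.sqrt (L s)) ≤
        ∫ s in Ioo (0:ℝ) T, C * g₁ s * Real.sqrt (L s) := by
      refine setIntegral_mono_set (hterm1.mono_set hIooIcc) ?_
        (HasSubset.Subset.eventuallyLE hsubo)
      filter_upwards [ae_restrict_mem measurableSet_Ioo] with s hs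
      exact mul_nonneg (mul_nonneg hC.le (hgnn s hs).1) (Real.sqrt_nonneg _)
    have hmono2 : (∫ s in Ioo (0:ℝ) t, C * g₂ s * E₁ s) ≤
        ∫ s in Ioo (0:ℝ) T, C * g₂ s * E₁ s := by
      refine setIntegral_mono_set (hterm2.mono_set hIooIcc) ?_
        (HasSubset.Subset.eventuallyLE hsubo)
      filter_upwards [ae_restrict_mem measurableSet_Ioo] with s hs
      exact mul_nonneg (mul_nonneg hC.le (hgnn s hs).2) (hEnn s (hIooIcc hs)).1
    linarith
  clear hφψ hψIcc hφdef hψdef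
  clear_value φ ψ
  clear φ ψ
  -- bounds on the two source integrals
  have hCgI : (∫ s in Ioo (0:ℝ) T, C * g₁ s * Real.sqrt (L s)) ≤ C * Real.sqrt M * S * A := by
    have hmono : (∫ s in Ioo (0:ℝ) T, C * g₁ s * Real.sqrt (L s)) ≤
        ∫ s in Ioo (0:ℝ) T, (C * (Real.sqrt M * S)) * g₁ s := by
      refine setIntegral_mono_on (hterm1.mono_set hIooIcc)
        (hg₁int.const_mul _) measurableSet_Ioo fun s hs => ?_
      have h := mul_le_mul_of_nonneg_left (hsqrtL s (hIooIcc hs))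
        (mul_nonneg hC.le (hgnn s hs).1)
      calc C * g₁ s * Real.sqrt (L s) = (C * g₁ s) * Real.sqrt (L s) := by ring
        _ ≤ (C * g₁ s) * (Real.sqrt M * S) := h
        _ = (C * (Real.sqrt M * S)) * g₁ s := by ring
    calc (∫ s in Ioo (0:ℝ) T, C * g₁ s * Real.sqrt (L s)) ≤
        ∫ s in Ioo (0:ℝ) T, (C * (Real.sqrt M * S)) * g₁ s := hmono
      _ = (C * (Real.sqrt M * S)) * A := by rw [hAdef]; exact integral_const_mul _ _
      _ = C * Real.sqrt M * S * A := by ring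
  have hCeI : (∫ s in Ioo (0:ℝ) T, C * g₂ s * E₁ s) ≤
      C ^ 2 / (2 * a₁) * Bsq + a₁ / 2 * I₁ := by
    have hint : IntegrableOn
        (fun s => C ^ 2 / (2 * a₁) * (g₂ s) ^ 2 + a₁ / 2 * (E₁ s) ^ 2) (Ioo 0 T) :=
      (hg₂sq.const_mul _).add ((hE₁sq.mono_set hIooIcc).const_mul _)
    have hmono : (∫ s in Ioo (0:ℝ) T, C * g₂ s * E₁ s) ≤
        ∫ s in Ioo (0:ℝ) T, (C ^ 2 / (2 * a₁) * (g₂ s) ^ 2 + a₁ / 2 * (E₁ s) ^ 2) := by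
      refine setIntegral_mono_on (hterm2.mono_set hIooIcc) hint measurableSet_Ioo
        fun s hs => ?_
      have key : C ^ 2 / (2 * a₁) * (g₂ s) ^ 2 + a₁ / 2 * (E₁ s) ^ 2 - C * g₂ s * E₁ s
          = (C * g₂ s - a₁ * E₁ s) ^ 2 / (2 * a₁) := by
        field_simp; ring
      have hnn := div_nonneg (sq_nonneg (C * g₂ s - a₁ * E₁ s))
        (by linarith : (0:ℝ) ≤ 2 * a₁)
      linarith [key]
    calc (∫ s in Ioo (0:ℝ) T, C * g₂ s * E₁ s) ≤
        ∫ s in Ioo (0:ℝ) T, (C ^ 2 / (2 * a₁) * (g₂ s) ^ 2 + a₁ / 2 * (E₁ s) ^ 2) := hmono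
      _ = C ^ 2 / (2 * a₁) * Bsq + a₁ / 2 * I₁ := by
          rw [hBdef, hI₁def,
            integral_add (hg₂sq.const_mul _) ((hE₁sq.mono_set hIooIcc).const_mul _),
            integral_const_mul, integral_const_mul]
  -- evaluate main inequality at T
  have hsplitT : (∫ s in Ioo (0:ℝ) T,
      (a₁ * (E₁ s) ^ 2 + a₂ * (E₂ s) ^ 2 + a₃ * (E₃ s) ^ 2)) =
      a₁ * I₁ + a₂ * I₂ + a₃ * I₃ := by
    have i1 : IntegrableOn (fun s => a₁ * (E₁ s) ^ 2) (Ioo 0 T) :=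
      (hE₁sq.mono_set hIooIcc).const_mul a₁
    have i2 : IntegrableOn (fun s => a₂ * (E₂ s) ^ 2) (Ioo 0 T) :=
      (hE₂sq.mono_set hIooIcc).const_mul a₂
    have i3 : IntegrableOn (fun s => a₃ * (E₃ s) ^ 2) (Ioo 0 T) :=
      (hE₃sq.mono_set hIooIcc).const_mul a₃
    have i12 : IntegrableOn (fun s => a₁ * (E₁ s) ^ 2 + a₂ * (E₂ s) ^ 2) (Ioo 0 T) := i1.add i2
    rw [hI₁def, hI₂def, hI₃def, integral_add i12 i3, integral_add i1 i2,
      integral_const_mul, integral_const_mul, integral_const_mul]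
  have hQT := hmain T hTIcc
  rw [hsplitT] at hQT
  have hLTnn := hLnn T hTIcc
  set Q : ℝ := L 0 + C * Real.sqrt M * S * A + C ^ 2 / (2 * a₁) * Bsq with hQdef
  clear_value Q
  have hQnn : 0 ≤ Q := by
    have h0 := hLnn 0 h0Icc
    have h1 : 0 ≤ C * Real.sqrt M * S * A :=
      mul_nonneg (mul_nonneg (mul_nonneg hC.le (Real.sqrt_nonneg M)) hSnn) hAnn
    have h2 : 0 ≤ C ^ 2 / (2 * a₁) * Bsq :=
      mul_nonneg (div_nonneg (sq_nonneg C) (by linarith)) hBnn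
    rw [hQdef]; linarith
  have hIQ : a₁ * I₁ + a₂ * I₂ + a₃ * I₃ ≤ Q + a₁ / 2 * I₁ := by
    rw [hQdef]; linarith
  -- evaluate at the maximum point
  have ht₀main := hmain t₀ ht₀
  have hIntNn : 0 ≤ ∫ s in Ioo (0:ℝ) t₀,
      (a₁ * (E₁ s) ^ 2 + a₂ * (E₂ s) ^ 2 + a₃ * (E₃ s) ^ 2) :=
    setIntegral_nonneg measurableSet_Ioo fun s _ =>
      add_nonneg (add_nonneg (mul_nonneg ha₁.le (sq_nonneg _))
        (mul_nonneg ha₂.le (sq_nonneg _))) (mul_nonneg ha₃.le (sq_nonneg _))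
  have hLt₀' : L t₀ ≤ Q + a₁ / 2 * I₁ := by rw [hQdef]; linarith
  have hSig' : m * (E₁ t₀ ^ 2 + E₂ t₀ ^ 2 + E₃ t₀ ^ 2) ≤ Q + a₁ / 2 * I₁ :=
    le_trans (hLequiv t₀ ht₀).1 hLt₀'
  -- record initial data and sup facts before clearing heavy hypotheses
  set e₀ : ℝ := E₁ 0 + E₂ 0 + E₃ 0 with he₀def
  clear_value e₀
  have hE0 := hEnn 0 h0Icc
  have hL0aux : L 0 ≤ M * (E₁ 0 ^ 2 + E₂ 0 ^ 2 + E₃ 0 ^ 2) := (hLequiv 0 h0Icc).2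
  have hsup : (⨆ t ∈ Icc (0:ℝ) T, (E₁ t + E₂ t + E₃ t)) ≤ S :=
    Real.iSup_le (fun t => Real.iSup_le (fun ht => hsum_le_S t ht) hSnn) hSnn
  clear hmain hterm1 hterm2 haterms hsqLc hg₁Icc hg₂Icc hg₂sm hg₂int hg₂sq hg₁int
    hE₁sq hE₂sq hE₃sq hineq hLd hcL hcE₁ hcE₂ hcE₃ hLequiv hEnn hgnn hre hLnn
    hsum_le_S hsqrtL ht₀max hCgI hCeI hQT hIntNn ht₀main hsplitT hLt₀'
    hLTnn
  -- pure scalar phase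
  have he₀nn : 0 ≤ e₀ := by
    obtain ⟨h1, h2, h3⟩ := hE0; rw [he₀def]; linarith
  have hL0 : L 0 ≤ M * e₀ ^ 2 := by
    obtain ⟨h1, h2, h3⟩ := hE0
    rw [he₀def]
    exact aux_sum_sq hM.le h1 h2 h3 hL0aux
  have h3S : S ^ 2 ≤ 3 * (E₁ t₀ ^ 2 + E₂ t₀ ^ 2 + E₃ t₀ ^ 2) := by
    rw [hSdef]; exact aux_sq3 _ _ _
  have hSig : m * S ^ 2 ≤ 3 * (Q + a₁ / 2 * I₁) := by
    calc m * S ^ 2 ≤ m * (3 * (E₁ t₀ ^ 2 + E₂ t₀ ^ 2 + E₃ t₀ ^ 2)) :=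
          mul_le_mul_of_nonneg_left h3S hm.le
      _ = 3 * (m * (E₁ t₀ ^ 2 + E₂ t₀ ^ 2 + E₃ t₀ ^ 2)) := by ring
      _ ≤ 3 * (Q + a₁ / 2 * I₁) := by linarith only [hSig']
  have ha₁I : a₁ * I₁ ≤ 2 * Q := by
    have h2 := mul_nonneg ha₂.le hI₂nn
    have h3 := mul_nonneg ha₃.le hI₃nn
    linarith only [hIQ, h2, h3]
  have ha₂I : a₂ * I₂ ≤ 2 * Q := by
    have h1 := mul_nonneg ha₁.le hI₁nn
    have h3 := mul_nonneg ha₃.le hI₃nn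
    linarith only [hIQ, h1, h3, hQnn]
  have ha₃I : a₃ * I₃ ≤ 2 * Q := by
    have h1 := mul_nonneg ha₁.le hI₁nn
    have h2 := mul_nonneg ha₂.le hI₂nn
    linarith only [hIQ, h1, h2, hQnn]
  have hmS : m * S ^ 2 ≤ 6 * Q := by linarith only [hSig, ha₁I]
  have hsa : 0 < Real.sqrt a₁ := Real.sqrt_pos.mpr ha₁
  set B' : ℝ := Real.sqrt Bsq / Real.sqrt a₁ with hB'def
  clear_value B'
  have hB'nn : 0 ≤ B' := by rw [hB'def]; exact div_nonneg (Real.sqrt_nonneg _) hsa.le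
  have hB'sq : B' ^ 2 = Bsq / a₁ := by
    rw [hB'def, div_pow, Real.sq_sqrt hBnn, Real.sq_sqrt ha₁.le]
  have hmS2 : m * S ^ 2 ≤ 6 * (M * e₀ ^ 2) + 6 * C * Real.sqrt M * S * A
      + 3 * C ^ 2 * B' ^ 2 := by
    have hBsb : 6 * (C ^ 2 / (2 * a₁) * Bsq) = 3 * C ^ 2 * B' ^ 2 := by
      rw [hB'sq]; field_simp; ring
    rw [hQdef] at hmS
    linarith only [hmS, hBsb, hL0]
  have hamgm : 12 * (C * Real.sqrt M * S * A) ≤ m * S ^ 2 + 36 * C ^ 2 * M / m * A ^ 2 := by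
    have key : m * S ^ 2 + 36 * C ^ 2 * M / m * A ^ 2 - 12 * (C * Real.sqrt M * S * A)
        = (m * S - 6 * C * Real.sqrt M * A) ^ 2 / m := by
      field_simp
      linear_combination (-(36 * C ^ 2 * A ^ 2)) * hsM
    have hnn := div_nonneg (sq_nonneg (m * S - 6 * C * Real.sqrt M * A)) hm.le
    linarith only [key, hnn]
  have hS2 : m * S ^ 2 ≤ 12 * (M * e₀ ^ 2) + 36 * C ^ 2 * M / m * A ^ 2
      + 6 * C ^ 2 * B' ^ 2 := by linarith only [hmS2, hamgm]
  set R : ℝ := c₁ * e₀ + c₂ * A + c₃ * B' with hRdef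
  clear_value R
  have hRnn : 0 ≤ R := by
    have h1 := mul_nonneg hc₁ he₀nn
    have h2 := mul_nonneg hc₂ hAnn
    have h3 := mul_nonneg hc₃ hB'nn
    rw [hRdef]; linarith
  have hmc₁ : m * c₁ ^ 2 = 12 * M := by
    rw [hc₁def, Real.sq_sqrt (by positivity)]; field_simp
  have hmc₂ : m * c₂ ^ 2 = 36 * C ^ 2 * M / m := by
    rw [hc₂def]; field_simp
    linear_combination 36 * hsM
  have hmc₃ : m * c₃ ^ 2 = 6 * C ^ 2 := by
    rw [hc₃def, mul_pow, Real.sq_sqrt (by positivity)]; field_simp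
  have hSR : S ≤ R := by
    have hexp : m * (c₁ ^ 2 * e₀ ^ 2 + c₂ ^ 2 * A ^ 2 + c₃ ^ 2 * B' ^ 2) ≤ m * R ^ 2 := by
      refine mul_le_mul_of_nonneg_left ?_ hm.le
      rw [hRdef]
      nlinarith only [mul_nonneg (mul_nonneg (mul_nonneg hc₁ hc₂) he₀nn) hAnn,
        mul_nonneg (mul_nonneg (mul_nonneg hc₁ hc₃) he₀nn) hB'nn,
        mul_nonneg (mul_nonneg (mul_nonneg hc₂ hc₃) hAnn) hB'nn]
    have hid : m * (c₁ ^ 2 * e₀ ^ 2 + c₂ ^ 2 * A ^ 2 + c₃ ^ 2 * B' ^ 2)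
        = (m * c₁ ^ 2) * e₀ ^ 2 + (m * c₂ ^ 2) * A ^ 2 + (m * c₃ ^ 2) * B' ^ 2 := by ring
    rw [hid, hmc₁, hmc₂, hmc₃] at hexp
    have hsq' : S ^ 2 ≤ R ^ 2 := le_of_mul_le_mul_left (by linarith only [hexp, hS2]) hm
    calc S = Real.sqrt (S ^ 2) := (Real.sqrt_sq hSnn).symm
      _ ≤ Real.sqrt (R ^ 2) := Real.sqrt_le_sqrt hsq'
      _ = R := Real.sqrt_sq hRnn
  set X : ℝ := e₀ + A + B' with hXdef
  clear_value X
  have hXnn : 0 ≤ X := by rw [hXdef]; linarith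
  have he₀X : e₀ ≤ X := by rw [hXdef]; linarith
  have hAX : A ≤ X := by rw [hXdef]; linarith
  have hB'X : B' ≤ X := by rw [hXdef]; linarith
  have he₀sq : e₀ ^ 2 ≤ X ^ 2 := pow_le_pow_left₀ he₀nn he₀X 2
  have hB'sqX : B' ^ 2 ≤ X ^ 2 := pow_le_pow_left₀ hB'nn hB'X 2
  have hRX : R ≤ (c₁ + c₂ + c₃) * X := by
    have h1 := mul_le_mul_of_nonneg_left he₀X hc₁
    have h2 := mul_le_mul_of_nonneg_left hAX hc₂
    have h3 := mul_le_mul_of_nonneg_left hB'X hc₃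
    rw [hRdef]; linarith
  have hSA : S * A ≤ (c₁ + c₂ + c₃) * X ^ 2 := by
    have h1 : S * A ≤ R * A := mul_le_mul_of_nonneg_right hSR hAnn
    have h2 : R * A ≤ ((c₁ + c₂ + c₃) * X) * X :=
      mul_le_mul hRX hAX hAnn (mul_nonneg (add_nonneg (add_nonneg hc₁ hc₂) hc₃) hXnn)
    calc S * A ≤ R * A := h1
      _ ≤ ((c₁ + c₂ + c₃) * X) * X := h2
      _ = (c₁ + c₂ + c₃) * X ^ 2 := by ring
  have h2Q : 2 * Q ≤ κ * X ^ 2 := by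
    have hBsb : 2 * (C ^ 2 / (2 * a₁) * Bsq) = C ^ 2 * B' ^ 2 := by
      rw [hB'sq]; field_simp
    have h1 : 2 * L 0 ≤ 2 * M * X ^ 2 := by
      have h := mul_le_mul_of_nonneg_left he₀sq hM.le
      linarith only [hL0, h]
    have h2 : 2 * C * Real.sqrt M * (S * A) ≤ 2 * C * Real.sqrt M * ((c₁ + c₂ + c₃) * X ^ 2) :=
      mul_le_mul_of_nonneg_left hSA
        (mul_nonneg (mul_nonneg (by norm_num : (0:ℝ) ≤ 2) hC.le) (Real.sqrt_nonneg M))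
    have h3 : C ^ 2 * B' ^ 2 ≤ C ^ 2 * X ^ 2 :=
      mul_le_mul_of_nonneg_left hB'sqX (sq_nonneg C)
    rw [hQdef, hκdef]; linarith only [h1, h2, h3, hBsb]
  have hκX : ∀ a I : ℝ, 0 < a → 0 ≤ I → a * I ≤ 2 * Q →
      Real.sqrt a * Real.sqrt I ≤ Real.sqrt κ * X := by
    intro a I ha hI haI
    have h1 : a * I ≤ κ * X ^ 2 := le_trans haI h2Q
    calc Real.sqrt a * Real.sqrt I = Real.sqrt (a * I) := (Real.sqrt_mul ha.le I).symm
      _ ≤ Real.sqrt (κ * X ^ 2) := Real.sqrt_le_sqrt h1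
      _ = Real.sqrt κ * X := by rw [Real.sqrt_mul hκ, Real.sqrt_sq hXnn]
  have hfin1 := hκX a₁ I₁ ha₁ hI₁nn ha₁I
  have hfin2 := hκX a₂ I₂ ha₂ hI₂nn ha₂I
  have hfin3 := hκX a₃ I₃ ha₃ hI₃nn ha₃I
  have hSX : S ≤ (c₁ + c₂ + c₃) * X := le_trans hSR hRX
  have hKX : (c₁ + c₂ + c₃) * X + 3 * (Real.sqrt κ * X) ≤ K * X := by
    rw [hKdef]; nlinarith only [hXnn]
  have hKXeq : K * X = K * e₀ + K * A + K / Real.sqrt a₁ * Real.sqrt Bsq := by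
    have hne := hsa.ne'
    rw [hXdef, hB'def]; field_simp
  linarith only [hsup, hfin1, hfin2, hfin3, hSX, hKX, hKXeq]
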